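/- Let B be a small strict bicategory and let A be a function assigning to each 1-morphism of B a positive real number, multiplicative under composition of 1-morphisms: A(f ≫ g) = A(f)·A(g) for all composable 1-morphisms f, g. For t ∈ ℝ define σ_t : ℂ[B] → ℂ[B] by σ_t(F)(Φ) = (A(f)/A(g))^{it}·F(Φ) for a 2-morphism Φ : f ⟶ g. Then each σ_t is compatible with the horizontal convolution product: σ_t(F ∘ G) = σ_t(F) ∘ σ_t(G) for all F, G ∈ ℂ[B]. -/

import Mathlib

open CategoryTheory CategoryTheory.Bicategory

universe w v u

variable (B : Type u) [Bicategory.{w, v} B] [Bicategory.Strict B]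

/-- The set of all 1-morphisms of `B`, as a sigma type. -/
def OneMor : Type (max u v) := Σ a b : B, a ⟶ b

/-- The set of all 2-morphisms of a small strict bicategory `B`, as a sigma type. -/
def TwoMor : Type (max u v w) := Σ (a b : B) (f g : a ⟶ b), f ⟶ g

/-- The source 1-morphism of a 2-morphism. -/
def TwoMor.src (Φ : TwoMor B) : OneMor B := ⟨Φ.1, Φ.2.1, Φ.2.2.1⟩

/-- The target 1-morphism of a 2-morphism. -/
def TwoMor.tgt (Φ : TwoMor B) : OneMor B := ⟨Φ.1, Φ.2.1, Φ.2.2.2.1⟩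

/-- `HDecomp B Φ Ψ Ξ` means that `Φ` is the horizontal composition `Ψ ◫ Ξ`. -/
def HDecomp (Φ Ψ Ξ : TwoMor B) : Prop :=
  ∃ (a b c : B) (f g : a ⟶ b) (h k : b ⟶ c) (η : f ⟶ g) (θ : h ⟶ k),
    Ψ = ⟨a, b, f, g, η⟩ ∧ Ξ = ⟨b, c, h, k, θ⟩ ∧
      Φ = ⟨a, c, f ≫ h, g ≫ k, (η ▷ h) ≫ (g ◁ θ)⟩

/-- The horizontal convolution product on `ℂ[B]`. -/
noncomputable def hconv (f g : TwoMor B → ℂ) : TwoMor B → ℂ :=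
  fun Φ => ∑ᶠ (p : TwoMor B × TwoMor B) (_ : HDecomp B Φ p.1 p.2), f p.1 * g p.2

/-- The flow `σ_t(F)(Φ) = (A(f)/A(g))^{it} · F(Φ)` for a 2-morphism `Φ : f ⟶ g`. -/
noncomputable def sigma (A : OneMor B → ℝ) (t : ℝ) (F : TwoMor B → ℂ) : TwoMor B → ℂ :=
  fun Φ => Complex.exp (Complex.I * t * Real.log (A Φ.src / A Φ.tgt)) * F Φ

/-! The factor `(A f / A g)^{it}` of a 2-morphism `f ⟶ g` is multiplicative along horizontal
composition because `A` is, so multiplying by it is compatible with any convolution whose terms are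
indexed by horizontal decompositions. -/

section

variable {B}

theorem HDecomp.src_div_tgt {A : OneMor B → ℝ}
    (hmul : ∀ (a b c : B) (u : a ⟶ b) (v : b ⟶ c),
      A ⟨a, c, u ≫ v⟩ = A ⟨a, b, u⟩ * A ⟨b, c, v⟩)
    {Φ Ψ Ξ : TwoMor B} (h : HDecomp B Φ Ψ Ξ) :
    A Φ.src / A Φ.tgt = A Ψ.src / A Ψ.tgt * (A Ξ.src / A Ξ.tgt) := by
  obtain ⟨a, b, c, f, g, h, k, η, θ, rfl, rfl, rfl⟩ := h
  simp only [TwoMor.src, TwoMor.tgt, hmul]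
  exact mul_div_mul_comm _ _ _ _

noncomputable def sigmaFactor (A : OneMor B → ℝ) (t : ℝ) (Φ : TwoMor B) : ℂ :=
  Complex.exp (Complex.I * t * Real.log (A Φ.src / A Φ.tgt))

theorem HDecomp.sigmaFactor_eq {A : OneMor B → ℝ} (hpos : ∀ f, 0 < A f)
    (hmul : ∀ (a b c : B) (u : a ⟶ b) (v : b ⟶ c),
      A ⟨a, c, u ≫ v⟩ = A ⟨a, b, u⟩ * A ⟨b, c, v⟩)
    (t : ℝ) {Φ Ψ Ξ : TwoMor B} (h : HDecomp B Φ Ψ Ξ) :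
    sigmaFactor A t Φ = sigmaFactor A t Ψ * sigmaFactor A t Ξ := by
  have hlog : Real.log (A Φ.src / A Φ.tgt) =
      Real.log (A Ψ.src / A Ψ.tgt) + Real.log (A Ξ.src / A Ξ.tgt) := by
    rw [h.src_div_tgt hmul]
    exact Real.log_mul (div_pos (hpos _) (hpos _)).ne' (div_pos (hpos _) (hpos _)).ne'
  simp only [sigmaFactor, hlog, Complex.ofReal_add, mul_add, Complex.exp_add]

theorem mul_hconv_of_hDecomp {χ : TwoMor B → ℂ}
    (hχ : ∀ Φ Ψ Ξ, HDecomp B Φ Ψ Ξ → χ Φ = χ Ψ * χ Ξ) (F G : TwoMor B → ℂ) :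
    (fun Φ => χ Φ * hconv B F G Φ) = hconv B (fun Φ => χ Φ * F Φ) (fun Φ => χ Φ * G Φ) := by
  classical
  funext Φ
  simp only [hconv, mul_finsum]
  refine finsum_congr fun p => ?_
  rw [finsum_eq_if, finsum_eq_if]
  split_ifs with h
  · rw [hχ _ _ _ h]
    ring
  · exact mul_zero _

end

/-- For `A` positive and multiplicative under composition of 1-morphisms, the maps
`σ_t(F)(Φ) = (A(f)/A(g))^{it}·F(Φ)` (for `Φ : f ⟶ g`) are compatible with the
horizontal convolution product on `ℂ[B]`. -/
theorem sigma_horizontal_compatible (A : OneMor B → ℝ) (hpos : ∀ f, 0 < A f)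
    (hmul : ∀ (a b c : B) (u : a ⟶ b) (v : b ⟶ c),
      A ⟨a, c, u ≫ v⟩ = A ⟨a, b, u⟩ * A ⟨b, c, v⟩) :
    ∀ (t : ℝ) (F G : TwoMor B → ℂ),
      (Function.support F).Finite → (Function.support G).Finite →
      sigma B A t (hconv B F G) = hconv B (sigma B A t F) (sigma B A t G) := by
  intro t F G _ _
  exact mul_hconv_of_hDecomp (fun _ _ _ => HDecomp.sigmaFactor_eq hpos hmul t) F G
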